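/- Let V be a finite-dimensional complex inner product space and β a self-adjoint endomorphism of V. A point [v] ∈ ℙ(V) satisfies [exp(tβ)v] = [v] for all t ∈ ℝ if and only if v is an eigenvector of β. Consequently, the fixed-point set of the flow ([v], t) ↦ [exp(tβ)v] on ℙ(V) is the finite union ℙ(V₁) ∪ ⋯ ∪ ℙ(V_k) of the projectivized eigenspaces V₁, …, V_k of β. -/

import Mathlib

/-!
In an orthonormal eigenbasis of `β` with real eigenvalues `λᵢ`, `exp β` is diagonal with entries
`exp λᵢ`. If `[exp β v] = [v]`, i.e. `exp β v = a v`, then every coordinate of `v` that does not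
vanish forces `exp λᵢ = a`; since the real exponential is injective, all these `λᵢ` coincide and
`v` is an eigenvector of `β`. Conversely `exp (tβ) v = exp (tμ) v` for an eigenvector `v`.
-/

open scoped LinearAlgebra.Projectivization

noncomputable instance stmt17.instTop (V : Type*) [NormedAddCommGroup V]
    [InnerProductSpace ℂ V] : TopologicalSpace (ℙ ℂ V) :=
  instTopologicalSpaceQuotient

lemma stmt17.exp_apply_ne_zero {V : Type*} [NormedAddCommGroup V] [InnerProductSpace ℂ V]
    [FiniteDimensional ℂ V] (A : V →L[ℂ] V) (v : V) (hv : v ≠ 0) :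
    NormedSpace.exp A v ≠ 0 := by
  intro h
  letI : NormedAlgebra ℚ (V →L[ℂ] V) := NormedAlgebra.restrictScalars ℚ ℂ (V →L[ℂ] V)
  have h1 : NormedSpace.exp (-A) * NormedSpace.exp A = 1 := by
    rw [← NormedSpace.exp_add_of_commute (Commute.neg_left (Commute.refl A)),
      neg_add_cancel, NormedSpace.exp_zero]
  have h2 : NormedSpace.exp (-A) (NormedSpace.exp A v) = v := by
    have := congrArg (fun f : V →L[ℂ] V => f v) h1
    simpa using this
  rw [h] at h2
  simp at h2
  exact hv h2.symm

theorem NormedSpace.exp_apply_of_apply_eq_smul {𝕜 E : Type*} [RCLike 𝕜] [NormedAddCommGroup E]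
    [NormedSpace 𝕜 E] [CompleteSpace E] {A : E →L[𝕜] E} {v : E} {μ : 𝕜} (h : A v = μ • v) :
    NormedSpace.exp A v = NormedSpace.exp μ • v := by
  have hpow (n : ℕ) : (A ^ n) v = μ ^ n • v := by
    induction n with
    | zero => simp
    | succ n ih => rw [pow_succ', mul_apply_eq_comp, ih, map_smul, h, smul_smul, pow_succ]
  have hA := (NormedSpace.exp_series_hasSum_exp' (𝕂 := 𝕜) A).mapL (ContinuousLinearMap.apply 𝕜 E v)
  have hμ := (NormedSpace.exp_series_hasSum_exp' (𝕂 := 𝕜) μ).smul_const v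
  refine hA.unique ?_
  simpa [hpow, smul_smul] using hμ

theorem Module.Basis.repr_apply_of_apply_basis_eq_smul {ι R M : Type*} [CommSemiring R]
    [AddCommMonoid M] [Module R M] (b : Module.Basis ι R M) {L : M →ₗ[R] M} {d : ι → R}
    (hL : ∀ i, L (b i) = d i • b i) (v : M) (i : ι) :
    b.repr (L v) i = d i * b.repr v i := by
  classical
  suffices (b.coord i).comp L = d i • b.coord i from LinearMap.congr_fun this v
  refine b.ext fun j => ?_
  simp only [LinearMap.comp_apply, hL, map_smul, Module.Basis.coord_apply, Module.Basis.repr_self,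
    LinearMap.smul_apply, Finsupp.single_apply, smul_eq_mul]
  split_ifs with hji <;> simp [hji]

theorem Module.Basis.exists_apply_eq_smul_of_apply_eq_smul {ι R M : Type*} [CommRing R]
    [IsDomain R] [AddCommGroup M] [Module R M] (b : Module.Basis ι R M) {T L : M →ₗ[R] M}
    {μ d : ι → R} (hT : ∀ i, T (b i) = μ i • b i) (hL : ∀ i, L (b i) = d i • b i)
    (hd : ∀ i j, d i = d j → μ i = μ j) {v : M} {a : R} (hv : L v = a • v) :
    ∃ c : R, T v = c • v := by
  obtain rfl | hv0 := eq_or_ne v 0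
  · exact ⟨0, by simp⟩
  obtain ⟨i₀, hi₀⟩ : ∃ i, b.repr v i ≠ 0 := by
    by_contra! h
    exact hv0 (b.repr.injective (by ext i; simp [h i]))
  have hd_eq {i} (hi : b.repr v i ≠ 0) : d i = a := by
    have := b.repr_apply_of_apply_basis_eq_smul hL v i
    rw [hv, map_smul, Finsupp.smul_apply, smul_eq_mul] at this
    exact (mul_right_cancel₀ hi this).symm
  refine ⟨μ i₀, b.ext_elem fun i => ?_⟩
  rw [b.repr_apply_of_apply_basis_eq_smul hT, map_smul, Finsupp.smul_apply, smul_eq_mul]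
  by_cases hi : b.repr v i = 0
  · simp [hi]
  · rw [hd _ _ ((hd_eq hi).trans (hd_eq hi₀).symm)]

theorem RCLike.exp_ofReal_injective {𝕜 : Type*} [RCLike 𝕜] :
    Function.Injective fun x : ℝ => NormedSpace.exp (x : 𝕜) := by
  intro x y hxy
  simp only [← NormedSpace.map_exp (algebraMap ℝ 𝕜) (continuous_algebraMap ℝ 𝕜),
    ← Real.exp_eq_exp_ℝ] at hxy
  exact Real.exp_injective (RCLike.ofReal_injective hxy)

theorem LinearMap.IsSymmetric.exists_apply_eq_smul_of_exp_apply_eq_smul {𝕜 E : Type*} [RCLike 𝕜]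
    [NormedAddCommGroup E] [InnerProductSpace 𝕜 E] [FiniteDimensional 𝕜 E] {A : E →L[𝕜] E}
    (hA : (A : E →ₗ[𝕜] E).IsSymmetric) {v : E} {a : 𝕜} (h : NormedSpace.exp A v = a • v) :
    ∃ μ : 𝕜, A v = μ • v := by
  have := FiniteDimensional.complete 𝕜 E
  let b := hA.eigenvectorBasis rfl
  have hb (i) : A (b i) = (hA.eigenvalues rfl i : 𝕜) • b i := hA.apply_eigenvectorBasis rfl i
  refine b.toBasis.exists_apply_eq_smul_of_apply_eq_smul (T := A)
    (L := (NormedSpace.exp A : E →L[𝕜] E))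
    (d := fun i => NormedSpace.exp (hA.eigenvalues rfl i : 𝕜))
    (by simpa using hb) (fun i => ?_) (fun i j hij => ?_) h
  · simpa using NormedSpace.exp_apply_of_apply_eq_smul (hb i)
  · rw [RCLike.exp_ofReal_injective hij]

theorem Projectivization.mk_exp_smul_apply_eq_iff {V : Type*} [NormedAddCommGroup V]
    [InnerProductSpace ℂ V] [FiniteDimensional ℂ V] {β : V →L[ℂ] V} (hβ : IsSelfAdjoint β)
    {v : V} (hv : v ≠ 0) :
    (∀ t : ℝ, Projectivization.mk ℂ (NormedSpace.exp (t • β) v)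
        (stmt17.exp_apply_ne_zero (t • β) v hv) = Projectivization.mk ℂ v hv) ↔
      ∃ μ : ℂ, β v = μ • v := by
  simp only [Projectivization.mk_eq_mk_iff']
  constructor
  · intro hfix
    obtain ⟨a, ha⟩ := hfix 1
    exact hβ.isSymmetric.exists_apply_eq_smul_of_exp_apply_eq_smul (a := a) (by simpa using ha.symm)
  · rintro ⟨μ, hμ⟩ t
    refine ⟨NormedSpace.exp ((t : ℂ) * μ), (NormedSpace.exp_apply_of_apply_eq_smul ?_).symm⟩
    rw [smul_apply, hμ, ← Complex.coe_smul, smul_smul]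

theorem stmt_17_general {V : Type*} [NormedAddCommGroup V] [InnerProductSpace ℂ V]
    [FiniteDimensional ℂ V] (β : V →L[ℂ] V) (hβ : IsSelfAdjoint β)
    (k : ℕ) (lam : Fin k → ℝ)
    (hall : ∀ μ : ℂ, Module.End.HasEigenvalue ((β : V →ₗ[ℂ] V) : Module.End ℂ V) μ →
      ∃ i, ((lam i : ℝ) : ℂ) = μ) :
    (∀ (v : V) (hv : v ≠ 0),
      ((∀ t : ℝ, Projectivization.mk ℂ (NormedSpace.exp (t • β) v)
          (stmt17.exp_apply_ne_zero (t • β) v hv) = Projectivization.mk ℂ v hv) ↔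
        ∃ μ : ℂ, β v = μ • v)) ∧
    {p : ℙ ℂ V | ∃ (v : V) (hv : v ≠ 0), p = Projectivization.mk ℂ v hv ∧
        ∀ t : ℝ, Projectivization.mk ℂ (NormedSpace.exp (t • β) v)
          (stmt17.exp_apply_ne_zero (t • β) v hv) = p} =
      ⋃ i, {p : ℙ ℂ V | ∃ (v : V) (hv : v ≠ 0),
        v ∈ Module.End.eigenspace ((β : V →ₗ[ℂ] V) : Module.End ℂ V) ((lam i : ℝ) : ℂ) ∧
        p = Projectivization.mk ℂ v hv} := by
  refine ⟨fun v hv => Projectivization.mk_exp_smul_apply_eq_iff hβ hv, ?_⟩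
  ext p
  simp only [Set.mem_ofPred_eq, Set.mem_iUnion, Module.End.mem_eigenspace_iff]
  constructor
  · rintro ⟨v, hv, rfl, hfix⟩
    obtain ⟨μ, hμ⟩ := (Projectivization.mk_exp_smul_apply_eq_iff hβ hv).mp hfix
    obtain ⟨i, rfl⟩ := hall μ (Module.End.hasEigenvalue_of_hasEigenvector
      ⟨Module.End.mem_eigenspace_iff.mpr hμ, hv⟩)
    exact ⟨i, v, hv, hμ, rfl⟩
  · rintro ⟨i, v, hv, hμ, rfl⟩
    exact ⟨v, hv, rfl, (Projectivization.mk_exp_smul_apply_eq_iff hβ hv).mpr ⟨_, hμ⟩⟩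

/-- Let `β` be a self-adjoint endomorphism of a finite-dimensional complex
inner product space `V`.  A point `[v] ∈ ℙ(V)` satisfies `[exp(tβ)v] = [v]` for all `t ∈ ℝ`
if and only if `v` is an eigenvector of `β`.  Consequently, if `λ₁, …, λ_k` are the distinct
eigenvalues of `β`, with eigenspaces `V₁, …, V_k`, the fixed-point set of the flow
`([v], t) ↦ [exp(tβ)v]` on `ℙ(V)` is the finite union `ℙ(V₁) ∪ ⋯ ∪ ℙ(V_k)`. -/
theorem stmt_17 {V : Type*} [NormedAddCommGroup V] [InnerProductSpace ℂ V]
    [FiniteDimensional ℂ V] (β : V →L[ℂ] V) (hβ : IsSelfAdjoint β)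
    (k : ℕ) (lam : Fin k → ℝ) (hinj : Function.Injective lam)
    (heig : ∀ i, Module.End.HasEigenvalue
      ((β : V →ₗ[ℂ] V) : Module.End ℂ V) ((lam i : ℝ) : ℂ))
    (hall : ∀ μ : ℂ, Module.End.HasEigenvalue ((β : V →ₗ[ℂ] V) : Module.End ℂ V) μ →
      ∃ i, ((lam i : ℝ) : ℂ) = μ) :
    (∀ (v : V) (hv : v ≠ 0),
      ((∀ t : ℝ, Projectivization.mk ℂ (NormedSpace.exp (t • β) v)
          (stmt17.exp_apply_ne_zero (t • β) v hv) = Projectivization.mk ℂ v hv) ↔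
        ∃ μ : ℂ, β v = μ • v)) ∧
    {p : ℙ ℂ V | ∃ (v : V) (hv : v ≠ 0), p = Projectivization.mk ℂ v hv ∧
        ∀ t : ℝ, Projectivization.mk ℂ (NormedSpace.exp (t • β) v)
          (stmt17.exp_apply_ne_zero (t • β) v hv) = p} =
      ⋃ i, {p : ℙ ℂ V | ∃ (v : V) (hv : v ≠ 0),
        v ∈ Module.End.eigenspace ((β : V →ₗ[ℂ] V) : Module.End ℂ V) ((lam i : ℝ) : ℂ) ∧
        p = Projectivization.mk ℂ v hv} :=
  stmt_17_general β hβ k lam hall
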